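/- arXiv:1003.0267 — 2 statements merged into one kernel-verified Lean document; each statement's English description precedes it below -/
import Mathlib

section
/- Let R = ℂ[x], H ∈ ℂ[x,z,t], and let D = D_H be the derivation D(f) = H_z·f_t - H_t·f_z on R[z,t]. Define Σ_n = Σ_{k=0}^{n} C(n,k)·{D^k(z), D^{n-k}(t)} where {f,g} = f_z·g_t - f_t·g_z. Then D(Σ_n) = Σ_{n+1} for all n ≥ 0. -/
/-!
The Jacobi identity says that `D = {H, ·}` is a derivation of the Poisson bracket, so the general
Leibniz rule identifies `Σ_n` with `D^n {z, t}`; the claim is then `D (D^n {z, t}) = D^(n+1) {z, t}`.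
-/

open MvPolynomial Finset

/-- The Poisson bracket on `ℂ[x][z,t] = ℂ[x,z,t]` with respect to `z` (index 1)
and `t` (index 2). -/
noncomputable def pb (f g : MvPolynomial (Fin 3) ℂ) : MvPolynomial (Fin 3) ℂ :=
  pderiv 1 f * pderiv 2 g - pderiv 2 f * pderiv 1 g

/-- The derivation `D = D_H`, `D(f) = {H,f} = H_z f_t - H_t f_z`. -/
noncomputable def DH (H : MvPolynomial (Fin 3) ℂ) :
    MvPolynomial (Fin 3) ℂ → MvPolynomial (Fin 3) ℂ := fun f => pb H f

/-- `Σ_n = Σ_{k=0}^n C(n,k)·{D^k(z), D^{n-k}(t)}`. -/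
noncomputable def Sig (H : MvPolynomial (Fin 3) ℂ) (n : ℕ) : MvPolynomial (Fin 3) ℂ :=
  ∑ k ∈ range (n + 1), (n.choose k) •
    pb ((DH H)^[k] (X 1)) ((DH H)^[n - k] (X 2))

theorem LinearMap.iterate_apply_bilin {R M : Type*} [CommSemiring R] [AddCommMonoid M]
    [Module R M] (D : M →ₗ[R] M) (B : M →ₗ[R] M →ₗ[R] M)
    (hD : ∀ a b, D (B a b) = B (D a) b + B a (D b)) (n : ℕ) (a b : M) :
    D^[n] (B a b) = ∑ k ∈ Finset.range (n + 1), n.choose k • B (D^[k] a) (D^[n - k] b) := by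
  induction n with
  | zero => simp
  | succ n ih =>
    rw [sum_choose_succ_nsmul (fun i j => B (D^[i] a) (D^[j] b)), Function.iterate_succ_apply',
      ih, map_sum, ← sum_add_distrib]
    refine sum_congr rfl fun k hk => ?_
    rw [map_nsmul, hD, smul_add, Nat.sub_add_comm (Finset.mem_range_succ_iff.mp hk),
      Function.iterate_succ_apply', Function.iterate_succ_apply', add_comm]

theorem MvPolynomial.pderiv_pderiv_comm {R σ : Type*} [CommSemiring R] (i j : σ)
    (f : MvPolynomial σ R) : pderiv i (pderiv j f) = pderiv j (pderiv i f) := by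
  classical
  induction f using MvPolynomial.induction_on with
  | C a => simp
  | add p q hp hq => simp [hp, hq]
  | mul_X p k hp =>
    simp only [pderiv_mul, map_add, pderiv_X, hp]
    rcases eq_or_ne k i with rfl | hki <;> rcases eq_or_ne k j with rfl | hkj <;>
      simp [*]

noncomputable def pbBilin :
    MvPolynomial (Fin 3) ℂ →ₗ[ℂ] MvPolynomial (Fin 3) ℂ →ₗ[ℂ] MvPolynomial (Fin 3) ℂ :=
  (LinearMap.mul ℂ _).compl₁₂ (pderiv 1).toLinearMap (pderiv 2).toLinearMap
    - (LinearMap.mul ℂ _).compl₁₂ (pderiv 2).toLinearMap (pderiv 1).toLinearMap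

theorem pbBilin_apply (f g) : pbBilin f g = pb f g := rfl

noncomputable def hamiltonianDerivation (H : MvPolynomial (Fin 3) ℂ) :
    Derivation ℂ (MvPolynomial (Fin 3) ℂ) (MvPolynomial (Fin 3) ℂ) :=
  pderiv 1 H • pderiv 2 - pderiv 2 H • pderiv 1

theorem coe_hamiltonianDerivation (H) : ⇑(hamiltonianDerivation H) = DH H := by
  ext f; simp [hamiltonianDerivation, DH, pb]

theorem DH_pb (H f g : MvPolynomial (Fin 3) ℂ) :
    DH H (pb f g) = pb (DH H f) g + pb f (DH H g) := by
  simp only [DH, pb, map_sub, pderiv_mul, pderiv_pderiv_comm (1 : Fin 3) 2, mul_sub, sub_mul,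
    mul_add, add_mul]
  ring

theorem Sig_eq_iterate (H : MvPolynomial (Fin 3) ℂ) (n : ℕ) :
    Sig H n = (DH H)^[n] (pb (X 1) (X 2)) := by
  rw [Sig, ← coe_hamiltonianDerivation, ← pbBilin_apply]
  exact ((hamiltonianDerivation H).toLinearMap.iterate_apply_bilin pbBilin
    (by simpa only [Derivation.coeFn_coe, coe_hamiltonianDerivation, pbBilin_apply] using DH_pb H)
    n _ _).symm

/-- `D(Σ_n) = Σ_{n+1}` for all `n ≥ 0`. -/
theorem DH_Sig (H : MvPolynomial (Fin 3) ℂ) (n : ℕ) :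
    DH H (Sig H n) = Sig H (n + 1) := by
  rw [Sig_eq_iterate, Sig_eq_iterate, Function.iterate_succ_apply']
end

section
/- Let d ≥ 2, R̄ = ℂ[x]/(x^d), and 1 ≤ j ≤ d-1. If φ is an R̄-automorphism of R̄[z,t] with Jacobian determinant 1 and φ ≡ id mod (x^j), then there exists h ∈ ℂ[z,t] with h(0,0) = 0 such that φ(z) ≡ z + h_t·x^j mod (x^{j+1}) and φ(t) ≡ t - h_z·x^j mod (x^{j+1}). -/
/-!
Write `φ(z) = z + x^j a` and `φ(t) = t + x^j b`. Expanding the Jacobian gives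
`1 + x^j (a_z + b_t) + x^{2j} {a, b}`, and since `j + 1 ≤ min (d, 2j)` the unit Jacobian condition
forces `x ∣ a_z + b_t`. Hence the reductions `a₀, b₀` of `a, b` modulo `x` form a closed vector
field `(a₀, -b₀)` in the variables `t, z`, and the polynomial Poincaré lemma (integrate in `t`,
then correct by an integral in `z`) produces `h ∈ ℂ[z,t]` with `h_t = a₀`, `h_z = -b₀`.
-/

open MvPolynomial

/-- The ideal `(x^d)` of `ℂ[x,z,t]`. -/
noncomputable def Idl (d : ℕ) : Ideal (MvPolynomial (Fin 3) ℂ) :=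
  Ideal.span {(X 0 : MvPolynomial (Fin 3) ℂ) ^ d}

/-- `R̄[z,t] = (ℂ[x]/(x^d))[z,t] = ℂ[x,z,t]/(x^d)`. -/
abbrev Qr (d : ℕ) := MvPolynomial (Fin 3) ℂ ⧸ Idl d

/-- The quotient map `ℂ[x,z,t] → R̄[z,t]`. -/
noncomputable def qk (d : ℕ) : MvPolynomial (Fin 3) ℂ →ₐ[ℂ] Qr d :=
  Ideal.Quotient.mkₐ ℂ (Idl d)

namespace MvPolynomial

theorem pderiv_pderiv_comm_s8 {σ R : Type*} [CommRing R] (i k : σ) (f : MvPolynomial σ R) :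
    pderiv i (pderiv k f) = pderiv k (pderiv i f) := by
  have hbracket : ⁅pderiv (R := R) (σ := σ) i, pderiv (R := R) k⁆ = 0 := by
    refine derivation_ext fun n => ?_
    classical
    simp only [Derivation.commutator_apply, pderiv_X, Pi.single_apply]
    split_ifs <;> simp
  simpa [Derivation.commutator_apply, sub_eq_zero] using congrArg (· f) hbracket

section PIntegral

variable {σ K : Type*} [Field K]

noncomputable def pintegral (i : σ) : MvPolynomial σ K →ₗ[K] MvPolynomial σ K :=
  (basisMonomials σ K).constr K fun m => monomial (m + Finsupp.single i 1) ((m i + 1 : K)⁻¹)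

theorem pintegral_monomial (i : σ) (m : σ →₀ ℕ) (c : K) :
    pintegral i (monomial m c) = monomial (m + Finsupp.single i 1) (c / (m i + 1)) := by
  classical
  have hbasis : monomial m c = c • basisMonomials σ K m := by simp [smul_monomial]
  rw [hbasis, map_smul, pintegral, Module.Basis.constr_basis, smul_monomial, smul_eq_mul,
    div_eq_mul_inv]

theorem pderiv_pintegral [CharZero K] (i : σ) (f : MvPolynomial σ K) :
    pderiv i (pintegral i f) = f := by
  induction f using MvPolynomial.induction_on' with
  | monomial m c =>
    rw [pintegral_monomial, pderiv_monomial, add_tsub_cancel_right]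
    congr 1
    simp only [Finsupp.add_apply, Finsupp.single_eq_same]
    push_cast
    exact div_mul_cancel₀ _ (Nat.cast_add_one_ne_zero (m i))
  | add f g hf hg => rw [map_add, map_add, hf, hg]

theorem pderiv_pintegral_of_ne {i k : σ} (hki : k ≠ i) (f : MvPolynomial σ K) :
    pderiv k (pintegral i f) = pintegral i (pderiv k f) := by
  classical
  induction f using MvPolynomial.induction_on' with
  | monomial m c =>
    have hexp : m + Finsupp.single i 1 - Finsupp.single k 1
        = m - Finsupp.single k 1 + Finsupp.single i 1 := by
      ext n
      simp only [Finsupp.add_apply, Finsupp.tsub_apply, Finsupp.single_apply]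
      split_ifs <;> subst_vars <;> simp_all
    rw [pintegral_monomial, pderiv_monomial, pderiv_monomial, pintegral_monomial, hexp]
    simp only [Finsupp.add_apply, Finsupp.tsub_apply, Finsupp.single_eq_of_ne hki,
      Finsupp.single_eq_of_ne hki.symm, tsub_zero, add_zero]
    congr 1
    ring
  | add f g hf hg => simp only [map_add, hf, hg]

theorem constantCoeff_pintegral (i : σ) (f : MvPolynomial σ K) :
    constantCoeff (pintegral i f) = 0 := by
  classical
  induction f using MvPolynomial.induction_on' with
  | monomial m c =>
    rw [pintegral_monomial, constantCoeff_monomial, if_neg]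
    intro h
    simpa using DFunLike.congr_fun h i
  | add f g hf hg => rw [map_add, map_add, hf, hg, add_zero]

theorem exists_potential [CharZero K] {i k : σ} (hik : i ≠ k) {f g : MvPolynomial σ K}
    (hclosed : pderiv k f = pderiv i g) :
    ∃ h : MvPolynomial σ K, pderiv i h = f ∧ pderiv k h = g ∧ constantCoeff h = 0 ∧
      ∀ l, l ≠ i → l ≠ k → pderiv l f = 0 → pderiv l g = 0 → pderiv l h = 0 := by
  set c := g - pderiv k (pintegral i f)
  have hc : pderiv i c = 0 := by
    rw [map_sub, pderiv_pderiv_comm_s8, pderiv_pintegral, hclosed, sub_self]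
  refine ⟨pintegral i f + pintegral k c, ?_, ?_, ?_, fun l hli hlk hf hg => ?_⟩
  · rw [map_add, pderiv_pintegral, pderiv_pintegral_of_ne hik, hc, map_zero, add_zero]
  · rw [map_add, pderiv_pintegral, add_sub_cancel]
  · rw [map_add, constantCoeff_pintegral, constantCoeff_pintegral, add_zero]
  · simp only [c, map_add, map_sub, pderiv_pintegral_of_ne hli, pderiv_pintegral_of_ne hlk,
      pderiv_pderiv_comm_s8 l k, hf, hg, map_zero, sub_zero, add_zero]

end PIntegral

section SubstZero

variable {σ R : Type*} [DecidableEq σ]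

noncomputable def substZero [CommSemiring R] (i : σ) :
    MvPolynomial σ R →ₐ[R] MvPolynomial σ R :=
  aeval (Function.update X i 0)

theorem substZero_X [CommSemiring R] (i n : σ) :
    substZero i (X n : MvPolynomial σ R) = if n = i then 0 else X n := by
  simp [substZero, Function.update_apply]

theorem pderiv_substZero_self [CommSemiring R] (i : σ) (f : MvPolynomial σ R) :
    pderiv i (substZero i f) = 0 := by
  induction f using MvPolynomial.induction_on with
  | C a => simp [substZero]
  | add f g hf hg => simp only [map_add, hf, hg, add_zero]
  | mul_X f n hf =>
    rw [map_mul, pderiv_mul, hf, substZero_X]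
    split_ifs with hn
    · simp
    · simp [pderiv_X_of_ne hn]

theorem pderiv_substZero_of_ne [CommSemiring R] {i k : σ} (hki : k ≠ i) (f : MvPolynomial σ R) :
    pderiv k (substZero i f) = substZero i (pderiv k f) := by
  induction f using MvPolynomial.induction_on with
  | C a => simp [substZero]
  | add f g hf hg => simp only [map_add, hf, hg]
  | mul_X f n hf =>
    rw [map_mul, pderiv_mul, pderiv_mul, map_add, map_mul, map_mul, hf, substZero_X, pderiv_X,
      Pi.single_apply]
    split_ifs <;> simp_all

theorem X_dvd_sub_substZero [CommRing R] (i : σ) (f : MvPolynomial σ R) :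
    X i ∣ f - substZero i f := by
  induction f using MvPolynomial.induction_on with
  | C a => simp [substZero]
  | add f g hf hg => simpa only [map_add, add_sub_add_comm] using dvd_add hf hg
  | mul_X f n hf =>
    rw [map_mul, substZero_X]
    split_ifs with hn
    · subst hn
      simp
    · simpa only [← sub_mul] using dvd_mul_of_dvd_left hf _

theorem substZero_eq_zero_of_X_dvd [CommSemiring R] {i : σ} {f : MvPolynomial σ R}
    (hf : X i ∣ f) : substZero i f = 0 := by
  obtain ⟨u, rfl⟩ := hf
  rw [map_mul, substZero_X, if_pos rfl, zero_mul]

end SubstZero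

end MvPolynomial

theorem pb_X_add_mul {ε : MvPolynomial (Fin 3) ℂ} (hε₁ : pderiv 1 ε = 0) (hε₂ : pderiv 2 ε = 0)
    (a b : MvPolynomial (Fin 3) ℂ) :
    pb (X 1 + ε * a) (X 2 + ε * b) = 1 + ε * (pderiv 1 a + pderiv 2 b) + ε ^ 2 * pb a b := by
  simp only [pb, map_add, pderiv_mul, hε₁, hε₂, pderiv_X_self,
    pderiv_X_of_ne (show (1 : Fin 3) ≠ 2 by decide), pderiv_X_of_ne (show (2 : Fin 3) ≠ 1 by decide)]
  ring

theorem X_dvd_divergence_of_pb_sub_one_mem {d j : ℕ} (hj : 1 ≤ j) (hjd : j + 1 ≤ d)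
    {a b : MvPolynomial (Fin 3) ℂ} (hjac : pb (X 1 + X 0 ^ j * a) (X 2 + X 0 ^ j * b) - 1 ∈ Idl d) :
    X 0 ∣ pderiv 1 a + pderiv 2 b := by
  have hε : ∀ k : Fin 3, k ≠ 0 → pderiv k (X 0 ^ j : MvPolynomial (Fin 3) ℂ) = 0 := fun k hk => by
    rw [pderiv_pow, pderiv_X_of_ne hk.symm, mul_zero]
  rw [pb_X_add_mul (hε 1 (by decide)) (hε 2 (by decide)), add_assoc, add_sub_cancel_left] at hjac
  have hsum : X 0 ^ (j + 1) ∣ X 0 ^ j * (pderiv 1 a + pderiv 2 b) + (X 0 ^ j) ^ 2 * pb a b :=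
    (pow_dvd_pow _ hjd).trans (Ideal.mem_span_singleton.mp hjac)
  have hsq : X 0 ^ (j + 1) ∣ (X 0 ^ j : MvPolynomial (Fin 3) ℂ) ^ 2 * pb a b :=
    dvd_mul_of_dvd_left (by rw [← pow_mul]; exact pow_dvd_pow _ (by omega)) _
  rw [pow_succ] at hsum hsq
  exact (mul_dvd_mul_iff_left (pow_ne_zero j (X_ne_zero 0))).mp ((dvd_add_left hsq).mp hsum)

theorem exists_hamiltonian_general (d j : ℕ) (hj1 : 1 ≤ j) (hjd : j ≤ d - 1)
    (p q : MvPolynomial (Fin 3) ℂ)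
    (hjac : pb p q - 1 ∈ Idl d)
    (hpj : p - X 1 ∈ Ideal.span {(X 0 : MvPolynomial (Fin 3) ℂ) ^ j})
    (hqj : q - X 2 ∈ Ideal.span {(X 0 : MvPolynomial (Fin 3) ℂ) ^ j}) :
    ∃ h : MvPolynomial (Fin 3) ℂ, pderiv 0 h = 0 ∧ constantCoeff h = 0 ∧
      p - (X 1 + pderiv 2 h * X 0 ^ j) ∈
        Ideal.span {(X 0 : MvPolynomial (Fin 3) ℂ) ^ (j + 1)} ∧
      q - (X 2 - pderiv 1 h * X 0 ^ j) ∈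
        Ideal.span {(X 0 : MvPolynomial (Fin 3) ℂ) ^ (j + 1)} := by
  obtain ⟨a, ha⟩ := Ideal.mem_span_singleton.mp hpj
  obtain ⟨b, hb⟩ := Ideal.mem_span_singleton.mp hqj
  obtain rfl : p = X 1 + X 0 ^ j * a := by rw [← ha, add_sub_cancel]
  obtain rfl : q = X 2 + X 0 ^ j * b := by rw [← hb, add_sub_cancel]
  have hclosed : pderiv 1 (substZero 0 a) = pderiv 2 (-substZero 0 b) := by
    have := substZero_eq_zero_of_X_dvd (X_dvd_divergence_of_pb_sub_one_mem hj1 (by omega) hjac)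
    rw [map_add, ← pderiv_substZero_of_ne (by decide), ← pderiv_substZero_of_ne (by decide)] at this
    rw [map_neg, eq_neg_iff_add_eq_zero, this]
  obtain ⟨h, h_t, h_z, h_const, h_indep⟩ := exists_potential (by decide) hclosed
  refine ⟨h, h_indep 0 (by decide) (by decide) (pderiv_substZero_self 0 a)
    (by rw [map_neg, pderiv_substZero_self, neg_zero]), h_const, ?_, ?_⟩
  · rw [h_t, Ideal.mem_span_singleton, pow_succ]
    convert mul_dvd_mul_left (X 0 ^ j) (X_dvd_sub_substZero 0 a) using 1
    ring
  · rw [h_z, Ideal.mem_span_singleton, pow_succ]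
    convert mul_dvd_mul_left (X 0 ^ j) (X_dvd_sub_substZero 0 b) using 1
    ring

/-- If `φ` is an `R̄`-automorphism of `R̄[z,t] = ℂ[x,z,t]/(x^d)` with Jacobian
determinant `1` which is congruent to the identity modulo `(x^j)`
(`1 ≤ j ≤ d-1`), then there exists `h ∈ ℂ[z,t]` with `h(0,0) = 0` such that
`φ(z) ≡ z + h_t·x^j` and `φ(t) ≡ t - h_z·x^j` modulo `(x^{j+1})`. -/
theorem exists_hamiltonian (d j : ℕ) (hd : 2 ≤ d) (hj1 : 1 ≤ j) (hjd : j ≤ d - 1)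
    (φ : Qr d ≃ₐ[ℂ] Qr d) (p q : MvPolynomial (Fin 3) ℂ)
    (hx : φ (qk d (X 0)) = qk d (X 0))
    (hp : φ (qk d (X 1)) = qk d p) (hq : φ (qk d (X 2)) = qk d q)
    (hjac : pb p q - 1 ∈ Idl d)
    (hpj : p - X 1 ∈ Ideal.span {(X 0 : MvPolynomial (Fin 3) ℂ) ^ j})
    (hqj : q - X 2 ∈ Ideal.span {(X 0 : MvPolynomial (Fin 3) ℂ) ^ j}) :
    ∃ h : MvPolynomial (Fin 3) ℂ, pderiv 0 h = 0 ∧ constantCoeff h = 0 ∧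
      p - (X 1 + pderiv 2 h * X 0 ^ j) ∈
        Ideal.span {(X 0 : MvPolynomial (Fin 3) ℂ) ^ (j + 1)} ∧
      q - (X 2 - pderiv 1 h * X 0 ^ j) ∈
        Ideal.span {(X 0 : MvPolynomial (Fin 3) ℂ) ^ (j + 1)} :=
  exists_hamiltonian_general d j hj1 hjd p q hjac hpj hqj
end
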